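/- The statistic rmin on inversion sequences of length n is Stirling: for every k, the number of inversion sequences s of length n with rmin(s) = k equals the number of permutations of [n] with exactly k right-to-left maxima, which is the signless Stirling number of the first kind c(n,k). -/

import Mathlib

open Finset

/-- The next index (used for descent/ascent definitions). -/
def nxt {n : ℕ} (i : Fin n) : Fin n := ⟨(i.1 + 1) % n, Nat.mod_lt _ i.pos⟩

/-- Number of descents of a permutation of `Fin n`. -/
def desP {n : ℕ} (π : Equiv.Perm (Fin n)) : ℕ :=
  (univ.filter fun i : Fin n => i.1 + 1 < n ∧ π (nxt i) < π i).card

/-- Number of inverse descents. -/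
def idesP {n : ℕ} (π : Equiv.Perm (Fin n)) : ℕ := desP π⁻¹

/-- Number of left-to-right maxima. -/
def lmaxP {n : ℕ} (π : Equiv.Perm (Fin n)) : ℕ :=
  (univ.filter fun i : Fin n => ∀ j, j < i → π j < π i).card

/-- Number of left-to-right minima. -/
def lminP {n : ℕ} (π : Equiv.Perm (Fin n)) : ℕ :=
  (univ.filter fun i : Fin n => ∀ j, j < i → π i < π j).card

/-- Number of right-to-left maxima. -/
def rmaxP {n : ℕ} (π : Equiv.Perm (Fin n)) : ℕ :=
  (univ.filter fun i : Fin n => ∀ j, i < j → π j < π i).card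

/-- Inversion sequences of length `n`, encoded as functions `Fin n → Fin n`
with `s i ≤ i` (0-based version of `0 ≤ sᵢ < i`). -/
def InvSeqs (n : ℕ) : Finset (Fin n → Fin n) :=
  univ.filter fun s => ∀ i : Fin n, (s i : ℕ) ≤ i.1

/-- Number of ascents of an inversion sequence. -/
def ascI {n : ℕ} (s : Fin n → Fin n) : ℕ :=
  (univ.filter fun i : Fin n => i.1 + 1 < n ∧ s i < s (nxt i)).card

/-- Number of distinct (nonzero) entries: `|{s₁,…,sₙ}| - 1`. -/
def distI {n : ℕ} (s : Fin n → Fin n) : ℕ := (univ.image s).card - 1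

/-- Number of zero entries. -/
def zeroI {n : ℕ} (s : Fin n → Fin n) : ℕ :=
  (univ.filter fun i : Fin n => (s i : ℕ) = 0).card

/-- Number of maximal entries (`sᵢ = i - 1`, 0-based `s i = i`). -/
def maxI {n : ℕ} (s : Fin n → Fin n) : ℕ :=
  (univ.filter fun i : Fin n => (s i : ℕ) = i.1).card

/-- The set of values of right-to-left minima. -/
def rminValues {n : ℕ} (s : Fin n → Fin n) : Finset ℕ :=
  (univ.filter fun i : Fin n => ∀ j, i < j → s i < s j).image fun i => (s i : ℕ)

/-- Number of right-to-left minima values. -/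
def rminI {n : ℕ} (s : Fin n → Fin n) : ℕ := (rminValues s).card

/-- Number of initial consecutive zeros. -/
def czeroI {n : ℕ} (s : Fin n → Fin n) : ℕ :=
  (univ.filter fun i : Fin n => ∀ j, j ≤ i → (s j : ℕ) = 0).card

/-- Length of the initial run of maximal entries `0,1,2,…`. -/
def cmaxI {n : ℕ} (s : Fin n → Fin n) : ℕ :=
  (univ.filter fun i : Fin n => ∀ j, j ≤ i → (s j : ℕ) = j.1).card

/-- The entry after the last zero (0 if `s` ends with a zero). -/
def ealzI {n : ℕ} (s : Fin n → Fin n) : ℕ :=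
  (univ.filter fun i : Fin n => (s i : ℕ) = 0 ∧ ∀ j, i < j → (s j : ℕ) ≠ 0).sum
    fun i => if h : i.1 + 1 < n then (s ⟨i.1 + 1, h⟩ : ℕ) else 0

/-- The entry after the last maximal entry of the initial run (0 if none). -/
def ealmI {n : ℕ} (s : Fin n → Fin n) : ℕ :=
  if h : cmaxI s < n then (s ⟨cmaxI s, h⟩ : ℕ) else 0

/-- The reverse of the complement of `π`. -/
def crev {n : ℕ} (π : Equiv.Perm (Fin n)) : Equiv.Perm (Fin n) :=
  Fin.revPerm * π * Fin.revPerm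

/-!
Encode `π` by its Lehmer code `c i = #{j < i | π i < π j}`, an inversion sequence. The code is
injective, since `c i` together with the values of `π` after `i` determines `π i`; hence it is a
bijection onto the `n!` inversion sequences. Position `i` is a right-to-left maximum of `π` iff it
is a strict right-to-left minimum of `c`, and a left-to-right maximum of `π` iff `c i = 0`.
Reversing `π` swaps right-to-left and left-to-right maxima, so `rmax` is distributed like the
number of zeros of an inversion sequence, whose generating function is
`∏ i < n, (x + i)`: entry `i` is either `0` (weight `x`) or one of `i` nonzero values.
-/

lemma invSeqs_eq_piFinset (n : ℕ) : InvSeqs n = Fintype.piFinset fun i : Fin n => Iic i := by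
  ext s
  simp only [InvSeqs, mem_filter, mem_univ, true_and, Fintype.mem_piFinset, mem_Iic, Fin.le_def]

lemma Fin.sum_Iic_ite_val_eq_zero {R : Type*} [CommSemiring R] {n : ℕ} (a : R) (i : Fin n) :
    ∑ x ∈ Iic i, (if (x : ℕ) = 0 then a else 1) = a + i := by
  have h := sum_map (Iic i) Fin.valEmbedding fun m => if m = 0 then a else 1
  rw [Fin.map_valEmbedding_Iic, ← Nat.range_succ_eq_Iic, sum_range_succ'] at h
  simpa [add_comm] using h.symm

lemma prod_range_add_natCast_eq_sum_invSeqs {R : Type*} [CommSemiring R] (a : R) (n : ℕ) :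
    ∏ j ∈ range n, (a + j) = ∑ s ∈ InvSeqs n, a ^ zeroI s := by
  simp_rw [← Fin.prod_univ_eq_prod_range, ← Fin.sum_Iic_ite_val_eq_zero, prod_univ_sum,
    ← invSeqs_eq_piFinset, prod_ite, prod_const_one, mul_one, prod_const]
  rfl

lemma card_invSeqs (n : ℕ) : #(InvSeqs n) = n.factorial := by
  simpa [add_comm, prod_range_add_one_eq_factorial] using
    (prod_range_add_natCast_eq_sum_invSeqs (1 : ℕ) n).symm

lemma Polynomial.coeff_sum_X_pow {ι : Type*} (s : Finset ι) (f : ι → ℕ) (k : ℕ) :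
    (∑ i ∈ s, X ^ f i : Polynomial ℕ).coeff k = #{i ∈ s | f i = k} := by
  simp [finsetSum_coeff, coeff_X_pow, eq_comm]

lemma eq_of_card_filter_lt_eq {α : Type*} [LinearOrder α] {s : Finset α} {a b : α}
    (ha : a ∈ s) (hb : b ∈ s) (h : #{v ∈ s | a < v} = #{v ∈ s | b < v}) : a = b := by
  have hlt : ∀ {a b}, a < b → b ∈ s → #{v ∈ s | b < v} < #{v ∈ s | a < v} := fun hab hb =>
    card_lt_card <| (ssubset_iff_of_subset (monotone_filter_right _ fun _ _ => hab.trans)).2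
      ⟨_, mem_filter.2 ⟨hb, hab⟩, by simp⟩
  rcases lt_trichotomy a b with hab | rfl | hab
  · exact absurd h (hlt hab hb).ne'
  · rfl
  · exact absurd h (hlt hab ha).ne

section LehmerCode

variable {n : ℕ}

def lehmerCode (π : Equiv.Perm (Fin n)) (i : Fin n) : Fin n :=
  ⟨#{j ∈ Iio i | π i < π j}, (card_filter_le _ _).trans_lt (by simp)⟩

lemma lehmerCode_mem_invSeqs (π : Equiv.Perm (Fin n)) : lehmerCode π ∈ InvSeqs n := by
  simp only [InvSeqs, mem_filter, mem_univ, true_and]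
  exact fun i => (card_filter_le (Iio i) _).trans (by simp)

lemma lehmerCode_eq_card_filter_compl_image (π : Equiv.Perm (Fin n)) (i : Fin n) :
    (lehmerCode π i : ℕ) = #{v ∈ ((Ioi i).image π)ᶜ | π i < v} := by
  rw [lehmerCode, Fin.val_mk, ← card_map π.toEmbedding]
  congr 1
  ext v
  obtain ⟨j, rfl⟩ := π.surjective v
  simp only [mem_map_equiv, mem_filter, mem_Iio, mem_compl, mem_image, mem_Ioi,
    EmbeddingLike.apply_eq_iff_eq, exists_eq_right, not_lt, Equiv.symm_apply_apply]
  constructor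
  · rintro ⟨hji, hv⟩
    exact ⟨hji.le, hv⟩
  · rintro ⟨hji, hv⟩
    exact ⟨hji.lt_of_ne (by rintro rfl; exact hv.false), hv⟩

lemma lehmerCode_injective : Function.Injective (lehmerCode (n := n)) := by
  intro π π' h
  ext i : 1
  induction i using WellFoundedGT.induction with
  | _ i ih =>
    have hW : (Ioi i).image π = (Ioi i).image π' :=
      image_congr fun j hj => ih j (mem_Ioi.1 hj)
    have hself : ∀ σ : Equiv.Perm (Fin n), σ i ∈ ((Ioi i).image σ)ᶜ := fun σ => by simp
    refine eq_of_card_filter_lt_eq (hself π) (hW ▸ hself π') ?_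
    rw [← lehmerCode_eq_card_filter_compl_image, hW, ← lehmerCode_eq_card_filter_compl_image, h]

lemma image_lehmerCode_univ : univ.image lehmerCode = InvSeqs n := by
  refine eq_of_subset_of_card_le (fun s hs => ?_) ?_
  · obtain ⟨π, -, rfl⟩ := mem_image.1 hs
    exact lehmerCode_mem_invSeqs π
  · rw [card_image_of_injective _ lehmerCode_injective, card_invSeqs, card_univ,
      Fintype.card_perm, Fintype.card_fin]

lemma card_filter_invSeqs (p : (Fin n → Fin n) → Prop) [DecidablePred p] :
    #{s ∈ InvSeqs n | p s} = #{π : Equiv.Perm (Fin n) | p (lehmerCode π)} := by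
  rw [← image_lehmerCode_univ, filter_image, card_image_of_injective _ lehmerCode_injective]

variable (π : Equiv.Perm (Fin n)) {i j : Fin n}

lemma lehmerCode_lt_of_forall_lt (h : ∀ j, i < j → π j < π i) (hij : i < j) :
    lehmerCode π i < lehmerCode π j := by
  refine Fin.lt_def.2 <| card_lt_card <| (ssubset_iff_of_subset fun l hl => ?_).2
    ⟨i, by simp [hij, h j hij], by simp⟩
  simp only [mem_filter, mem_Iio] at hl ⊢
  exact ⟨hl.1.trans hij, (h j hij).trans hl.2⟩

lemma exists_lehmerCode_le_of_lt (hij : i < j) (hπ : π i < π j) :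
    ∃ j', i < j' ∧ lehmerCode π j' ≤ lehmerCode π i := by
  obtain ⟨j₀, ⟨hij₀, hπ₀⟩, hmin⟩ :=
    wellFounded_lt.has_min {j | i < j ∧ π i < π j} ⟨j, hij, hπ⟩
  refine ⟨j₀, hij₀, Fin.le_def.2 <| card_le_card fun l hl => ?_⟩
  simp only [mem_filter, mem_Iio] at hl ⊢
  have hπl : π i < π l := hπ₀.trans hl.2
  refine ⟨?_, hπl⟩
  rcases lt_trichotomy l i with hli | rfl | hil
  · exact hli
  · exact absurd hπl (lt_irrefl _)
  · exact (hmin l ⟨hil, hπl⟩ hl.1).elim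

end LehmerCode

lemma rminI_eq_card_filter {n : ℕ} (s : Fin n → Fin n) :
    rminI s = #{i | ∀ j, i < j → s i < s j} := by
  refine card_image_of_injOn fun i hi i' hi' hval => ?_
  simp only [coe_filter, mem_univ, true_and, Set.mem_ofPred_eq] at hi hi'
  by_contra hne
  rcases lt_or_gt_of_ne hne with h | h
  · exact (hi i' h).ne (Fin.ext hval)
  · exact (hi' i h).ne' (Fin.ext hval)

lemma rminI_lehmerCode {n : ℕ} (π : Equiv.Perm (Fin n)) : rminI (lehmerCode π) = rmaxP π := by
  rw [rminI_eq_card_filter, rmaxP]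
  congr 1
  refine filter_congr fun i _ => ⟨fun h => ?_, fun h j => lehmerCode_lt_of_forall_lt π h⟩
  by_contra! hmax
  obtain ⟨j, hij, hπ⟩ := hmax
  obtain ⟨j', hij', hle⟩ := exists_lehmerCode_le_of_lt π hij
    (hπ.lt_of_ne (π.injective.ne hij.ne))
  exact (h j' hij').not_ge hle

lemma zeroI_lehmerCode {n : ℕ} (π : Equiv.Perm (Fin n)) : zeroI (lehmerCode π) = lmaxP π := by
  rw [zeroI, lmaxP]
  congr 1
  refine filter_congr fun i _ => ?_
  simp only [lehmerCode, card_eq_zero, filter_eq_empty_iff, mem_Iio, not_lt]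
  exact forall₂_congr fun j hji => ⟨fun h => h.lt_of_ne (π.injective.ne hji.ne), le_of_lt⟩

lemma lmaxP_mul_revPerm {n : ℕ} (π : Equiv.Perm (Fin n)) :
    lmaxP (π * Fin.revPerm) = rmaxP π := by
  refine card_equiv Fin.revPerm fun i => ?_
  simp only [mem_filter, mem_univ, true_and, Equiv.Perm.mul_apply, Fin.revPerm_apply]
  conv_rhs => rw [Fin.rev_surjective.forall]
  simp [Fin.rev_lt_rev]

lemma card_filter_rmaxP_eq_card_filter_lmaxP (n k : ℕ) :
    #{π : Equiv.Perm (Fin n) | rmaxP π = k} = #{π : Equiv.Perm (Fin n) | lmaxP π = k} :=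
  card_equiv (Equiv.mulRight Fin.revPerm) fun π => by simp [lmaxP_mul_revPerm]

/-- `rmin` on inversion sequences is a Stirling statistic: it is
distributed like `rmax` on permutations, whose distribution is given by the signless
Stirling numbers of the first kind. -/
theorem rmin_is_stirling (n k : ℕ) :
    ((InvSeqs n).filter fun s => rminI s = k).card =
      (univ.filter fun π : Equiv.Perm (Fin n) => rmaxP π = k).card ∧
    (univ.filter fun π : Equiv.Perm (Fin n) => rmaxP π = k).card =
      ((∏ j ∈ Finset.range n, (Polynomial.X + Polynomial.C j) : Polynomial ℕ)).coeff k := by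
  have hgen := prod_range_add_natCast_eq_sum_invSeqs (Polynomial.X : Polynomial ℕ) n
  simp only [← Polynomial.C_eq_natCast, Nat.cast_id] at hgen
  refine ⟨by simp only [card_filter_invSeqs, rminI_lehmerCode], ?_⟩
  calc #{π : Equiv.Perm (Fin n) | rmaxP π = k}
      = #{π : Equiv.Perm (Fin n) | lmaxP π = k} := card_filter_rmaxP_eq_card_filter_lmaxP n k
    _ = #{s ∈ InvSeqs n | zeroI s = k} := by simp only [card_filter_invSeqs, zeroI_lehmerCode]
    _ = _ := by rw [hgen, Polynomial.coeff_sum_X_pow]
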